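/- arXiv:2006.13387 — 2 statements merged into one kernel-verified Lean document; each statement's English description precedes it below -/
import Mathlib

section
/- For a symmetric positive definite block matrix K = [[K_xx, K_xy],[K_xy^T, K_yy]] and its block-diagonal part C = [[K_xx, 0],[0, K_yy]], the generalized eigenvalues of the pencil (K, C) all lie in the interval (0, 2), and hence the spectral condition number of C^{-1}K is at most 2/λ_min where λ_min is the smallest generalized eigenvalue. -/
/-!
Flipping the sign of the off-diagonal blocks of `K` is a congruence by `diag(1, -1)`, so
`K' = [[Kxx, -Kxy], [-Kxyᵀ, Kyy]]` is positive definite as well, and `K + K' = 2C`. For an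
eigenpair `K v = λ C v` the quadratic forms then give `v*Kv = λ v*Cv` and `v*K'v = (2 - λ) v*Cv`
with both left-hand sides positive, whence `0 < λ < 2`.
-/

open Matrix

namespace Matrix

theorem PosDef.fromBlocks_neg_offDiag {m n R : Type*} [Fintype m] [Fintype n] [DecidableEq m]
    [DecidableEq n] [CommRing R] [PartialOrder R] [StarRing R] {A : Matrix m m R}
    {B : Matrix m n R} {C : Matrix n m R} {D : Matrix n n R} (h : (fromBlocks A B C D).PosDef) :
    (fromBlocks A (-B) (-C) D).PosDef := by
  set J : Matrix (m ⊕ n) (m ⊕ n) R := fromBlocks 1 0 0 (-1)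
  have hJJ : J * J = 1 := by simp [J, fromBlocks_multiply, fromBlocks_one]
  have hJ :=
    h.conjTranspose_mul_mul_same (mulVec_injective_of_isUnit (IsUnit.of_mul_eq_one _ hJJ))
  simpa [J, fromBlocks_conjTranspose, fromBlocks_multiply] using hJ

theorem generalized_eigenvalue_pos_and_lt_two {ι R : Type*} [Fintype ι] [Field R]
    [LinearOrder R] [IsStrictOrderedRing R] [StarRing R] {K L C : Matrix ι ι R} (hK : K.PosDef)
    (hL : L.PosDef) (hKL : K + L = 2 • C) {μ : R} {v : ι → R} (hv : v ≠ 0)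
    (hμ : K *ᵥ v = μ • C *ᵥ v) :
    0 < μ ∧ μ < 2 := by
  have hk := hK.dotProduct_mulVec_pos hv
  have hl := hL.dotProduct_mulVec_pos hv
  have hk_eq : star v ⬝ᵥ K *ᵥ v = μ * (star v ⬝ᵥ C *ᵥ v) := by
    rw [hμ, dotProduct_smul, smul_eq_mul]
  have hkl_eq : star v ⬝ᵥ K *ᵥ v + star v ⬝ᵥ L *ᵥ v = 2 * (star v ⬝ᵥ C *ᵥ v) := by
    rw [← dotProduct_add, ← add_mulVec, hKL, smul_mulVec, dotProduct_smul, two_nsmul, two_mul]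
  have hc : 0 < star v ⬝ᵥ C *ᵥ v := by linarith
  have hl_eq : star v ⬝ᵥ L *ᵥ v = (2 - μ) * (star v ⬝ᵥ C *ᵥ v) := by
    linear_combination hkl_eq - hk_eq
  exact ⟨pos_of_mul_pos_left (hk_eq ▸ hk) hc.le,
    sub_pos.mp (pos_of_mul_pos_left (hl_eq ▸ hl) hc.le)⟩

end Matrix

theorem stmt0_general (n : ℕ) (Kxx Kxy Kyy : Matrix (Fin n) (Fin n) ℝ)
    (K C : Matrix (Fin n ⊕ Fin n) (Fin n ⊕ Fin n) ℝ)
    (hK : K = Matrix.fromBlocks Kxx Kxy Kxyᵀ Kyy)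
    (hC : C = Matrix.fromBlocks Kxx 0 0 Kyy)
    (hKpd : K.PosDef) :
    (∀ (lam : ℝ) (v : Fin n ⊕ Fin n → ℝ), v ≠ 0 →
        K.mulVec v = lam • C.mulVec v → 0 < lam ∧ lam < 2) ∧
    (∀ lammin lammax : ℝ,
      ((∃ v : Fin n ⊕ Fin n → ℝ, v ≠ 0 ∧ K.mulVec v = lammin • C.mulVec v) ∧
        (∀ (lam : ℝ) (v : Fin n ⊕ Fin n → ℝ), v ≠ 0 →
          K.mulVec v = lam • C.mulVec v → lammin ≤ lam)) →
      (∃ v : Fin n ⊕ Fin n → ℝ, v ≠ 0 ∧ K.mulVec v = lammax • C.mulVec v) →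
      lammax / lammin ≤ 2 / lammin) := by
  subst hK hC
  have hflip := hKpd.fromBlocks_neg_offDiag
  have hsum : fromBlocks Kxx Kxy Kxyᵀ Kyy + fromBlocks Kxx (-Kxy) (-Kxyᵀ) Kyy =
      2 • fromBlocks Kxx 0 0 Kyy := by
    rw [fromBlocks_add, fromBlocks_smul]
    simp [two_smul]
  have hbounds := fun (lam : ℝ) v (hv : v ≠ 0) hlam ↦
    generalized_eigenvalue_pos_and_lt_two hKpd hflip hsum (μ := lam) hv hlam
  refine ⟨hbounds, ?_⟩
  rintro lammin lammax ⟨⟨v, hv, hvmin⟩, -⟩ ⟨w, hw, hwmax⟩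
  exact div_le_div_of_nonneg_right (hbounds _ w hw hwmax).2.le (hbounds _ v hv hvmin).1.le

/-- For a symmetric positive definite block matrix `K = [[Kxx, Kxy],[Kxyᵀ, Kyy]]` and its
block-diagonal part `C = [[Kxx, 0],[0, Kyy]]`, all generalized eigenvalues of the pencil
`(K, C)` lie in `(0, 2)`, and hence the spectral condition number of `C⁻¹K` is at most
`2 / λ_min`. -/
theorem stmt0 (n : ℕ) (Kxx Kxy Kyy : Matrix (Fin n) (Fin n) ℝ)
    (K C : Matrix (Fin n ⊕ Fin n) (Fin n ⊕ Fin n) ℝ)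
    (hK : K = Matrix.fromBlocks Kxx Kxy Kxyᵀ Kyy)
    (hC : C = Matrix.fromBlocks Kxx 0 0 Kyy)
    (hKpd : K.PosDef) (hxx : Kxx.PosDef) (hyy : Kyy.PosDef) :
    (∀ (lam : ℝ) (v : Fin n ⊕ Fin n → ℝ), v ≠ 0 →
        K.mulVec v = lam • C.mulVec v → 0 < lam ∧ lam < 2) ∧
    (∀ lammin lammax : ℝ,
      ((∃ v : Fin n ⊕ Fin n → ℝ, v ≠ 0 ∧ K.mulVec v = lammin • C.mulVec v) ∧
        (∀ (lam : ℝ) (v : Fin n ⊕ Fin n → ℝ), v ≠ 0 →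
          K.mulVec v = lam • C.mulVec v → lammin ≤ lam)) →
      (∃ v : Fin n ⊕ Fin n → ℝ, v ≠ 0 ∧ K.mulVec v = lammax • C.mulVec v) →
      lammax / lammin ≤ 2 / lammin) :=
  stmt0_general n Kxx Kxy Kyy K C hK hC hKpd
end

section
/- For the additive Schwarz operator P = Σ_{i=0}^N R_iᵀ(R_i A R_iᵀ)⁻¹R_i A with A symmetric positive definite, the largest eigenvalue of P is at most N+1. -/
/-!
Each term `Qᵢ = Rᵢᵀ (Rᵢ A Rᵢᵀ)⁻¹ Rᵢ A` is an `A`-orthogonal projection, so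
`⟪Qᵢ v, v⟫_A ≤ ⟪v, v⟫_A`; in matrix form, `A - A Qᵢ` is the Schur complement of the positive
definite block `Rᵢ A Rᵢᵀ` in the positive semidefinite matrix `[Rᵢ; I] A [Rᵢ; I]ᵀ`. Summing over
the `N + 1` terms gives `⟪P v, v⟫_A ≤ (N + 1) ⟪v, v⟫_A`, and for an eigenvector the left-hand
side is `μ ⟪v, v⟫_A` with `⟪v, v⟫_A > 0`.
-/

open Matrix

variable {m n : Type*} [Fintype m] [Fintype n]

lemma Matrix.vecMul_injective_of_mulVec_surjective [DecidableEq m] {α : Type*} [Semiring α]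
    {R : Matrix m n α} (hR : Function.Surjective R.mulVec) : Function.Injective R.vecMul := by
  obtain ⟨B, hRB⟩ := mulVec_surjective_iff_exists_right_inverse.mp hR
  exact Function.LeftInverse.injective (g := (· ᵥ* B)) fun x => by
    simp only [vecMul_vecMul, hRB, vecMul_one]

lemma Matrix.PosDef.mul_mul_transpose_of_mulVec_surjective [DecidableEq m] {A : Matrix n n ℝ}
    (hA : A.PosDef) {R : Matrix m n ℝ} (hR : Function.Surjective R.mulVec) :
    (R * A * Rᵀ).PosDef := by
  simpa [conjTranspose_eq_transpose_of_trivial] using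
    hA.mul_mul_conjTranspose_same (vecMul_injective_of_mulVec_surjective hR)

lemma Matrix.PosDef.posSemidef_sub_mul_projection [DecidableEq m] [DecidableEq n]
    {A : Matrix n n ℝ} (hA : A.PosDef) {R : Matrix m n ℝ} (hR : Function.Surjective R.mulVec) :
    (A - A * (Rᵀ * (R * A * Rᵀ)⁻¹ * R * A)).PosSemidef := by
  have hAt : Aᵀ = A := by simpa [conjTranspose_eq_transpose_of_trivial] using hA.isHermitian.eq
  have hRAR := hA.mul_mul_transpose_of_mulVec_surjective hR
  have := hRAR.isUnit.invertible
  have hblock : (fromBlocks (R * A * Rᵀ) (R * A) (R * A)ᴴ A).PosSemidef := by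
    have := hA.posSemidef.mul_mul_conjTranspose_same (fromRows R (1 : Matrix n n ℝ))
    rw [conjTranspose_fromRows_eq_fromCols_conjTranspose, fromRows_mul, fromRows_mul_fromCols]
      at this
    simpa [conjTranspose_eq_transpose_of_trivial, transpose_mul, hAt, Matrix.mul_assoc] using this
  simpa [conjTranspose_eq_transpose_of_trivial, transpose_mul, hAt, Matrix.mul_assoc] using
    (PosDef.fromBlocks₁₁ (R * A) A hRAR).mp hblock

lemma Matrix.PosDef.dotProduct_mulVec_sum_projection_le [DecidableEq n] {ι : Type*} [Fintype ι]
    {κ : ι → Type*} [∀ i, Fintype (κ i)] [∀ i, DecidableEq (κ i)] {A : Matrix n n ℝ}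
    (hA : A.PosDef) {R : ∀ i, Matrix (κ i) n ℝ} (hR : ∀ i, Function.Surjective (R i).mulVec)
    (v : n → ℝ) :
    v ⬝ᵥ (A * ∑ i, (R i)ᵀ * (R i * A * (R i)ᵀ)⁻¹ * R i * A) *ᵥ v
      ≤ Fintype.card ι * (v ⬝ᵥ A *ᵥ v) := by
  have hterm (i : ι) : v ⬝ᵥ (A * ((R i)ᵀ * (R i * A * (R i)ᵀ)⁻¹ * R i * A)) *ᵥ v
      ≤ v ⬝ᵥ A *ᵥ v := by
    have := (hA.posSemidef_sub_mul_projection (hR i)).dotProduct_mulVec_nonneg v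
    simpa only [star_trivial, sub_mulVec, dotProduct_sub, sub_nonneg] using this
  calc v ⬝ᵥ (A * ∑ i, (R i)ᵀ * (R i * A * (R i)ᵀ)⁻¹ * R i * A) *ᵥ v
      = ∑ i, v ⬝ᵥ (A * ((R i)ᵀ * (R i * A * (R i)ᵀ)⁻¹ * R i * A)) *ᵥ v := by
        rw [Finset.mul_sum, sum_mulVec, dotProduct_sum]
    _ ≤ ∑ _i : ι, v ⬝ᵥ A *ᵥ v := Finset.sum_le_sum fun i _ => hterm i
    _ = Fintype.card ι * (v ⬝ᵥ A *ᵥ v) := by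
        rw [Finset.sum_const, Finset.card_univ, nsmul_eq_mul]

lemma Matrix.PosDef.le_of_mulVec_eq_smul {A P : Matrix n n ℝ} (hA : A.PosDef) {c μ : ℝ}
    {v : n → ℝ} (hv : v ≠ 0) (hPv : P *ᵥ v = μ • v)
    (hle : v ⬝ᵥ (A * P) *ᵥ v ≤ c * (v ⬝ᵥ A *ᵥ v)) : μ ≤ c := by
  have hpos : 0 < v ⬝ᵥ A *ᵥ v := by simpa using hA.dotProduct_mulVec_pos hv
  rw [← mulVec_mulVec, hPv, mulVec_smul, dotProduct_smul, smul_eq_mul] at hle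
  exact le_of_mul_le_mul_right hle hpos

/-- For the additive Schwarz operator `P = Σ_{i=0}^N R_iᵀ (R_i A R_iᵀ)⁻¹ R_i A` with `A`
symmetric positive definite and full-row-rank `R_i`, every eigenvalue of `P` is at most
`N + 1`. -/
theorem stmt7 (n N : ℕ) (A : Matrix (Fin n) (Fin n) ℝ) (hA : A.PosDef)
    (m : Fin (N + 1) → ℕ) (R : ∀ i, Matrix (Fin (m i)) (Fin n) ℝ)
    (hR : ∀ i, Function.Surjective (R i).mulVec)
    (P : Matrix (Fin n) (Fin n) ℝ)
    (hP : P = ∑ i, (R i)ᵀ * (R i * A * (R i)ᵀ)⁻¹ * R i * A) :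
    ∀ (μ : ℝ) (v : Fin n → ℝ), v ≠ 0 → P.mulVec v = μ • v → μ ≤ (N : ℝ) + 1 := by
  intro μ v hv hPv
  refine hA.le_of_mulVec_eq_smul hv hPv ?_
  simpa only [hP, Fintype.card_fin, Nat.cast_add, Nat.cast_one] using
    hA.dotProduct_mulVec_sum_projection_le hR v
end
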